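/- arXiv:1705.01587 — 6 statements merged into one kernel-verified Lean document; each statement's English description precedes it below -/
import Mathlib

section
/- Let E be a Banach lattice and let P be a positive projection on E, i.e. a bounded linear operator with P ∘ P = P and Px ≥ 0 whenever x ≥ 0. Then: (1) for every x in the range of P, the element P|x| belongs to the range of P and is the least element of the set {z ∈ range(P) : z ≥ x and z ≥ −x} (so P|x| is the modulus of x within range(P), which is therefore a vector lattice in the induced order); (2) for every x ∈ range(P) one has ‖x‖ ≤ ‖P|x|‖ ≤ ‖P‖·‖x‖, so x ↦ ‖P|x|‖ defines a norm on range(P) equivalent to the restriction of ‖·‖; (3) if y ≥ 0 is a quasi-interior point of the positive cone of E (i.e. the set {x ∈ E : ∃ c ≥ 0, |x| ≤ c·y} is norm-dense in E), then Py is a quasi-interior point of the positive cone of range(P), i.e. the set {x ∈ range(P) : ∃ c ≥ 0, P|x| ≤ c·Py} is dense in range(P). -/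
/-!
A positive projection `P` is monotone, so `|P u| ≤ P |u|` for every `u`. For `x` in the range,
`x = P x` turns this into `|x| ≤ P |x|`, while `|x| ≤ z = P z` gives `P |x| ≤ z`; hence `P |x|` is
the least upper bound of `±x` in the range, and solidity of the norm gives `‖x‖ ≤ ‖P |x|‖`.
Applying `P` once more, `P |P u| ≤ P |u|`, so `P` maps the principal ideal of `y` into the ideal
of `P y` in the range; by continuity it maps the closure of the former, all of `E`, into the
closure of the latter.
-/

open Set

section Lattice

variable {E F : Type*} [AddCommGroup E] [Lattice E] [FunLike F E E] [AddMonoidHomClass F E E]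
  {P : F}

theorem abs_map_le_map_abs (hP : Monotone P) (u : E) : |P u| ≤ P |u| :=
  abs_le'.2 ⟨hP (le_abs_self u), map_neg P u ▸ hP (neg_le_abs u)⟩

theorem abs_le_map_abs_of_map_eq (hP : Monotone P) {x : E} (hx : P x = x) : |x| ≤ P |x| := by
  simpa only [hx] using abs_map_le_map_abs hP x

theorem isLeast_map_abs_of_map_eq (hP : Monotone P) (hproj : ∀ x, P (P x) = P x) {x : E}
    (hx : P x = x) : IsLeast {z | z ∈ range P ∧ x ≤ z ∧ -x ≤ z} (P |x|) := by
  refine ⟨⟨mem_range_self _, abs_le'.1 (abs_le_map_abs_of_map_eq hP hx)⟩, ?_⟩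
  rintro _ ⟨⟨z, rfl⟩, hxz, hnxz⟩
  simpa only [hproj] using hP (abs_le'.2 ⟨hxz, hnxz⟩)

theorem map_abs_map_le_map_abs (hP : Monotone P) (hproj : ∀ x, P (P x) = P x) (u : E) :
    P |P u| ≤ P |u| :=
  hproj |u| ▸ hP (abs_map_le_map_abs hP u)

end Lattice

theorem norm_le_norm_map_abs_of_map_eq {E F : Type*} [NormedAddCommGroup E] [Lattice E]
    [HasSolidNorm E] [IsOrderedAddMonoid E] [FunLike F E E] [AddMonoidHomClass F E E] {P : F}
    (hP : Monotone P) {x : E} (hx : P x = x) : ‖x‖ ≤ ‖P |x|‖ := by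
  have hle : |x| ≤ P |x| := abs_le_map_abs_of_map_eq hP hx
  refine norm_le_norm_of_abs_le_abs ?_
  rwa [abs_of_nonneg ((abs_nonneg x).trans hle)]

theorem mapsTo_principalIdeal {E F : Type*} [AddCommGroup E] [Lattice E] [Module ℝ E]
    [FunLike F E E] [LinearMapClass F ℝ E E] {P : F} (hP : Monotone P)
    (hproj : ∀ x, P (P x) = P x) (y : E) :
    MapsTo P {x | ∃ c : ℝ, 0 ≤ c ∧ |x| ≤ c • y}
      {x | x ∈ range P ∧ ∃ c : ℝ, 0 ≤ c ∧ P |x| ≤ c • P y} := by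
  rintro u ⟨c, hc, hu⟩
  refine ⟨mem_range_self u, c, hc, ?_⟩
  calc P |P u| ≤ P |u| := map_abs_map_le_map_abs hP hproj u
    _ ≤ P (c • y) := hP hu
    _ = c • P y := map_smul P c y

theorem stmt_2_general
    {E : Type*} [NormedAddCommGroup E] [Lattice E] [HasSolidNorm E] [IsOrderedAddMonoid E] [NormedSpace ℝ E]
    (P : E →L[ℝ] E)
    (h_proj : ∀ x : E, P (P x) = P x)
    (h_pos : ∀ x : E, 0 ≤ x → 0 ≤ P x) :
    (∀ x ∈ Set.range P,
        P |x| ∈ Set.range P ∧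
        IsLeast {z : E | z ∈ Set.range P ∧ x ≤ z ∧ -x ≤ z} (P |x|)) ∧
    (∀ x ∈ Set.range P, ‖x‖ ≤ ‖P |x|‖ ∧ ‖P |x|‖ ≤ ‖P‖ * ‖x‖) ∧
    (∀ y : E, 0 ≤ y →
        Dense {x : E | ∃ c : ℝ, 0 ≤ c ∧ |x| ≤ c • y} →
        Set.range P ⊆
          closure {x : E | x ∈ Set.range P ∧ ∃ c : ℝ, 0 ≤ c ∧ P |x| ≤ c • P y}) := by
  have hP : Monotone P := (monotone_iff_map_nonneg P).2 h_pos
  refine ⟨?_, ?_, ?_⟩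
  · rintro _ ⟨u, rfl⟩
    exact ⟨mem_range_self _, isLeast_map_abs_of_map_eq hP h_proj (h_proj u)⟩
  · rintro _ ⟨u, rfl⟩
    refine ⟨norm_le_norm_map_abs_of_map_eq hP (h_proj u), ?_⟩
    simpa only [norm_abs_eq_norm] using P.le_opNorm |P u|
  · intro y _ hdense
    exact (P.continuous.range_subset_closure_image_dense hdense).trans
      (closure_mono (mapsTo_principalIdeal hP h_proj y).image_subset)

/-- Range of a positive projection on a Banach lattice: `P|x|` is the modulus of `x`
within the range of `P`, the norm `x ↦ ‖P|x|‖` is equivalent to the original norm on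
the range, and the image of a quasi-interior point of the positive cone is a
quasi-interior point of the positive cone of the range. -/
theorem stmt_2
    {E : Type*} [NormedAddCommGroup E] [Lattice E] [HasSolidNorm E] [IsOrderedAddMonoid E] [NormedSpace ℝ E] [CompleteSpace E]
    (P : E →L[ℝ] E)
    (h_proj : ∀ x : E, P (P x) = P x)
    (h_pos : ∀ x : E, 0 ≤ x → 0 ≤ P x) :
    (∀ x ∈ Set.range P,
        P |x| ∈ Set.range P ∧
        IsLeast {z : E | z ∈ Set.range P ∧ x ≤ z ∧ -x ≤ z} (P |x|)) ∧
    (∀ x ∈ Set.range P, ‖x‖ ≤ ‖P |x|‖ ∧ ‖P |x|‖ ≤ ‖P‖ * ‖x‖) ∧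
    (∀ y : E, 0 ≤ y →
        Dense {x : E | ∃ c : ℝ, 0 ≤ c ∧ |x| ≤ c • y} →
        Set.range P ⊆
          closure {x : E | x ∈ Set.range P ∧ ∃ c : ℝ, 0 ≤ c ∧ P |x| ≤ c • P y}) :=
  stmt_2_general P h_proj h_pos
end

section
/- Let G be a commutative additive group and S ⊆ G a nonempty subsemigroup (closed under addition) whose generated subgroup is all of G. Let E be a Banach lattice and let (T_t)_{t∈S} be a family of positive bounded linear operators on E with T_{t+s} = T_t ∘ T_s for all t,s ∈ S and sup_{t∈S} ‖T_t‖ < ∞, such that for every x ∈ E the orbit {T_t x : t ∈ S} is relatively compact in the weak topology σ(E, E′). Then there exists a positive projection P on E (bounded linear, P∘P = P, positive) such that P ∘ T_t = T_t ∘ P for all t ∈ S, Px = x for every x ∈ E satisfying T_t x = x for all t ∈ S, and: (a) there exists a family (S_g)_{g∈G} of bounded linear operators on F := range(P), each positive with respect to the order induced from E and each bijective, with S_{g+h} = S_g ∘ S_h for all g,h ∈ G, sup_{g∈G} ‖S_g‖ < ∞, and S_t x = T_t x for every t ∈ S and x ∈ F; (b) for every x ∈ E with Px = 0, the vector 0 belongs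 to the closure of {T_t x : t ∈ S} in the weak topology σ(E, E′). -/
/-!
The weak-operator closure `𝒯` of `{T t}` is compact: it embeds into a product of the weakly
compact orbit closures, and pointwise weak limits of the uniformly bounded `T t` are again
bounded operators. Under composition `𝒯` is a compact commutative semigroup with separately
continuous multiplication, so its minimal ideal `⋂ A, A 𝒯` is nonempty; it is a group whose
identity `P` is an idempotent, and `t ↦ P T t` extends from `S` to the group `G` generated by
`S`. Restricting to `range P` gives `Srep`. Every element of `𝒯` is a weak pointwise limit of
the `T t`, so it is positive, bounded by `sup ‖T t‖` and fixes the common fixed points (these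
conditions are convex and norm closed, hence weakly closed); for `P` this also gives (b).
-/

open Filter Topology Set ContinuousLinearMapWOT

section LatticeGroup
variable {α : Type*} [Lattice α] [AddCommGroup α] [IsOrderedAddMonoid α]

theorem nsmul_inf_eq_zero_of_inf_eq_zero {a b : α} (ha : 0 ≤ a) (hb : 0 ≤ b) (h : a ⊓ b = 0)
    (n : ℕ) : n • a ⊓ b = 0 := by
  induction n with
  | zero => simpa using hb
  | succ n ih =>
    have hle : (n + 1) • a ⊓ b ≤ n • a := by
      calc (n + 1) • a ⊓ b ≤ (n • a + a) ⊓ (n • a + b) := by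
            rw [succ_nsmul]
            exact inf_le_inf_left _ (le_add_of_nonneg_left (nsmul_nonneg ha n))
        _ = n • a := by rw [← add_inf, h, add_zero]
    refine le_antisymm ?_ (le_inf (nsmul_nonneg ha _) hb)
    exact ih ▸ le_inf hle inf_le_right

theorem nonneg_of_nsmul_nonneg {a : α} {n : ℕ} (hn : n ≠ 0) (h : 0 ≤ n • a) : 0 ≤ a := by
  have hdisj : n • a⁻ ⊓ n • a⁺ = 0 :=
    nsmul_inf_eq_zero_of_inf_eq_zero (negPart_nonneg a) (nsmul_nonneg (posPart_nonneg a) n)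
      (by rw [inf_comm, nsmul_inf_eq_zero_of_inf_eq_zero (posPart_nonneg a) (negPart_nonneg a)
        (posPart_inf_negPart_eq_zero a)]) n
  have hle : n • a⁻ ≤ n • a⁺ := by
    rwa [← posPart_sub_negPart a, smul_sub, sub_nonneg] at h
  have hzero : n • a⁻ = 0 := (inf_eq_left.mpr hle).symm.trans hdisj
  have hneg : a⁻ = 0 :=
    le_antisymm (hzero ▸ le_self_nsmul (negPart_nonneg a) hn) (negPart_nonneg a)
  rw [← posPart_sub_negPart a, hneg, sub_zero]
  exact posPart_nonneg a

theorem inv_natCast_smul_nonneg [Module ℝ α] {x : α} (hx : 0 ≤ x) (n : ℕ) :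
    0 ≤ (n : ℝ)⁻¹ • x := by
  rcases eq_or_ne n 0 with rfl | hn
  · simp
  refine nonneg_of_nsmul_nonneg hn ?_
  rwa [← Nat.cast_smul_eq_nsmul ℝ, smul_inv_smul₀ (Nat.cast_ne_zero.mpr hn)]

end LatticeGroup

namespace HasSolidNorm
variable {E : Type*} [NormedAddCommGroup E] [Lattice E] [HasSolidNorm E] [IsOrderedAddMonoid E]
  [NormedSpace ℝ E]

-- The order is not assumed compatible with scalars: this uses that the cone is closed and that
-- lattice-ordered groups are unperforated.
theorem smul_nonneg {c : ℝ} (hc : 0 ≤ c) {x : E} (hx : 0 ≤ x) : 0 ≤ c • x := by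
  have hlim : Tendsto (fun n : ℕ => ((⌊c * n⌋₊ : ℝ) / n) • x) atTop (𝓝 (c • x)) :=
    ((tendsto_nat_floor_mul_div_atTop hc).comp tendsto_natCast_atTop_atTop).smul_const x
  refine isClosed_nonneg.mem_of_tendsto hlim (Eventually.of_forall fun n => ?_)
  rw [div_eq_inv_mul, mul_smul, Nat.cast_smul_eq_nsmul]
  exact inv_natCast_smul_nonneg (nsmul_nonneg hx _) n

theorem convex_nonneg : Convex ℝ {x : E | 0 ≤ x} := fun _ hx _ hy _ _ ha hb _ =>
  add_nonneg (smul_nonneg ha hx) (smul_nonneg hb hy)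

end HasSolidNorm

section WeakTopology

variable {E : Type*} [NormedAddCommGroup E] [NormedSpace ℝ E]

theorem isClosed_toWeakSpace_image {C : Set E} (hconv : Convex ℝ C) (hC : IsClosed C) :
    IsClosed (toWeakSpace ℝ E '' C) := by
  rw [← hC.closure_eq, hconv.toWeakSpace_closure ℝ]
  exact isClosed_closure

theorem mem_of_toWeakSpace_mem_closure {C : Set E} (hconv : Convex ℝ C) (hC : IsClosed C)
    {ι : Type*} {z : ι → E} (hz : ∀ i, z i ∈ C) {y : E}
    (hy : toWeakSpace ℝ E y ∈ closure (range fun i => toWeakSpace ℝ E (z i))) : y ∈ C := by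
  obtain ⟨y', hy', hyy'⟩ := (isClosed_toWeakSpace_image hconv hC).closure_subset_iff.mpr
    (range_subset_iff.mpr fun i => mem_image_of_mem _ (hz i)) hy
  exact (toWeakSpace ℝ E).injective hyy' ▸ hy'

namespace ContinuousLinearMapWOT

theorem continuous_toWeakSpace_apply (x : E) :
    Continuous fun A : E →WOT[ℝ] E => toWeakSpace ℝ E (A x) :=
  WeakBilin.continuous_of_continuous_eval _ fun y => continuous_dual_apply x y

theorem isInducing_toWeakSpace_apply :
    IsInducing fun (A : E →WOT[ℝ] E) (x : E) => toWeakSpace ℝ E (A x) := by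
  refine IsInducing.of_comp
    (g := fun (f : E → WeakSpace ℝ E) (p : E × StrongDual ℝ E) => p.2 (f p.1))
    (continuous_pi continuous_toWeakSpace_apply) ?_ isInducing_inducingFn
  exact continuous_pi fun p =>
    (WeakBilin.eval_continuous (topDualPairing ℝ E).flip p.2).comp (continuous_apply p.1)

variable {ι : Type*} {T : ι → E →L[ℝ] E}

theorem toWeakSpace_apply_mem_closure {A : E →WOT[ℝ] E}
    (hA : A ∈ closure (range fun i => ofCLM (T i))) (x : E) :
    toWeakSpace ℝ E (A x) ∈ closure (range fun i => toWeakSpace ℝ E (T i x)) :=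
  map_mem_closure (f := fun A : E →WOT[ℝ] E => toWeakSpace ℝ E (A x))
    (continuous_toWeakSpace_apply x) hA (by rintro - ⟨i, rfl⟩; exact ⟨i, rfl⟩)

theorem apply_mem_of_mem_closure {A : E →WOT[ℝ] E}
    (hA : A ∈ closure (range fun i => ofCLM (T i))) {x : E} {C : Set E} (hconv : Convex ℝ C)
    (hC : IsClosed C) (hT : ∀ i, T i x ∈ C) : A x ∈ C :=
  mem_of_toWeakSpace_mem_closure hconv hC hT (toWeakSpace_apply_mem_closure hA x)

theorem norm_apply_le_of_mem_closure {A : E →WOT[ℝ] E}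
    (hA : A ∈ closure (range fun i => ofCLM (T i))) {M : ℝ} (hM : ∀ i, ‖T i‖ ≤ M)
    (x : E) : ‖A x‖ ≤ M * ‖x‖ :=
  mem_closedBall_zero_iff.mp <| apply_mem_of_mem_closure hA (convex_closedBall 0 _)
    Metric.isClosed_closedBall fun i => mem_closedBall_zero_iff.mpr ((T i).le_of_opNorm_le (hM i) x)

theorem isCompact_closure_range_ofCLM {M : ℝ} (hM : ∀ i, ‖T i‖ ≤ M)
    (horb : ∀ x, IsCompact (closure (range fun i => toWeakSpace ℝ E (T i x)))) :
    IsCompact (closure (range fun i => ofCLM (T i))) := by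
  have hK : IsCompact (closure ((fun (A : E →WOT[ℝ] E) x => toWeakSpace ℝ E (A x)) ''
      range fun i => ofCLM (T i))) :=
    (isCompact_pi_infinite horb).closure_of_subset <| by
      rintro - ⟨-, ⟨i, rfl⟩, rfl⟩ x
      exact subset_closure ⟨i, rfl⟩
  rw [isInducing_toWeakSpace_apply.closure_eq_preimage_closure_image]
  refine isInducing_toWeakSpace_apply.isCompact_preimage' hK fun f hf => ?_
  have hlin :
      f ∈ closure (range ((↑) : (E →ₗ[ℝ] WeakSpace ℝ E) → E → WeakSpace ℝ E)) := by
    refine closure_mono ?_ hf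
    rintro - ⟨-, ⟨i, rfl⟩, rfl⟩
    exact ⟨(toWeakSpace ℝ E).toLinearMap ∘ₗ (T i).toLinearMap, rfl⟩
  let L := (toWeakSpace ℝ E).symm.toLinearMap ∘ₗ linearMapOfMemClosureRangeCoe f hlin
  have hL : ∀ x, ‖L x‖ ≤ M * ‖x‖ := fun x => by
    have hfx : toWeakSpace ℝ E (L x) ∈ closure (range fun i => toWeakSpace ℝ E (T i x)) := by
      refine map_mem_closure (f := fun g : E → WeakSpace ℝ E => g x) (continuous_apply x) hf ?_
      rintro - ⟨-, ⟨i, rfl⟩, rfl⟩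
      exact ⟨i, rfl⟩
    simpa using mem_of_toWeakSpace_mem_closure (convex_closedBall 0 (M * ‖x‖))
      Metric.isClosed_closedBall
      (fun i => mem_closedBall_zero_iff.mpr ((T i).le_of_opNorm_le (hM i) x)) hfx
  exact ⟨ofCLM (L.mkContinuous M hL), rfl⟩

end ContinuousLinearMapWOT

end WeakTopology

section CompactSemigroup
variable {X : Type*} [CommSemigroup X] [TopologicalSpace X] [CompactSpace X] [T2Space X]
  [SeparatelyContinuousMul X] [Nonempty X]

theorem exists_isIdempotentElem_forall_exists_mul_eq :
    ∃ e : X, IsIdempotentElem e ∧ ∀ x, ∃ y, e * x * y = e := by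
  -- `q` lies in the minimal ideal `⋂ a, a X` of `X`.
  obtain ⟨q, hq⟩ : (⋂ a : X, range (a * ·)).Nonempty := by
    refine IsCompact.nonempty_iInter_of_directed_nonempty_isCompact_isClosed _
      (fun a b => ⟨a * b, ?_, ?_⟩) (fun a => range_nonempty _)
      (fun a => isCompact_range (continuous_const_mul a))
      (fun a => (isCompact_range (continuous_const_mul a)).isClosed)
    · rintro - ⟨y, rfl⟩
      exact ⟨b * y, (mul_assoc a b y).symm⟩
    · rintro - ⟨y, rfl⟩
      exact ⟨a * y, (mul_left_comm b a y).trans (mul_assoc a b y).symm⟩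
  simp only [mem_iInter, mem_range] at hq
  obtain ⟨r, hr⟩ := hq (q * q)
  refine ⟨q * r, ?_, fun x => ?_⟩
  · calc q * r * (q * r) = q * q * r * r := by ac_rfl
      _ = q * r := by rw [hr]
  · obtain ⟨u, hu⟩ := hq (q * r * x)
    refine ⟨u * r, ?_⟩
    calc q * r * x * (u * r) = q * r * x * u * r := by ac_rfl
      _ = q * r := by rw [hu]

end CompactSemigroup

namespace IsIdempotentElem
variable {X : Type*} [CommSemigroup X] {e : X}

abbrev fixedCommMonoid (he : IsIdempotentElem e) : CommMonoid {x : X // e * x = x} where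
  mul x y := ⟨x * y, by rw [← mul_assoc, x.2]⟩
  mul_assoc x y z := Subtype.ext (mul_assoc (x : X) y z)
  one := ⟨e, he⟩
  one_mul x := Subtype.ext x.2
  mul_one x := Subtype.ext ((mul_comm _ _).trans x.2)
  mul_comm x y := Subtype.ext (mul_comm (x : X) y)

noncomputable abbrev fixedCommGroup (he : IsIdempotentElem e) (hdiv : ∀ x, ∃ y, e * x * y = e) :
    CommGroup {x : X // e * x = x} :=
  let := he.fixedCommMonoid
  commGroupOfIsUnit fun x => by
    obtain ⟨y, hy⟩ := hdiv x
    refine isUnit_iff_exists_inv.mpr ⟨⟨e * y, by rw [← mul_assoc, he]⟩, Subtype.ext ?_⟩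
    show (x : X) * (e * y) = e
    rw [mul_left_comm, ← mul_assoc, hy]

end IsIdempotentElem

namespace AddSubsemigroup
variable {G : Type*} [AddCommGroup G] (S : AddSubsemigroup G)

theorem exists_eq_sub_of_closure_eq_top (hS_ne : (S : Set G).Nonempty)
    (hS_gen : AddSubgroup.closure (S : Set G) = ⊤) (g : G) : ∃ s t : S, g = s - t := by
  obtain ⟨t₀, ht₀⟩ := hS_ne
  have hg : g ∈ AddSubgroup.closure (S : Set G) := hS_gen ▸ AddSubgroup.mem_top g
  induction hg using AddSubgroup.closure_induction with
  | mem s hs => exact ⟨⟨s, hs⟩ + ⟨s, hs⟩, ⟨s, hs⟩, by simp⟩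
  | zero => exact ⟨⟨t₀, ht₀⟩, ⟨t₀, ht₀⟩, (sub_self _).symm⟩
  | add g h _ _ hg hh =>
    obtain ⟨s, t, rfl⟩ := hg
    obtain ⟨s', t', rfl⟩ := hh
    exact ⟨s + s', t + t', by push_cast; abel⟩
  | neg g _ hg =>
    obtain ⟨s, t, rfl⟩ := hg
    exact ⟨t, s, (neg_sub _ _)⟩

theorem exists_monoidHom_extension {H : Type*} [CommGroup H] (hS_ne : (S : Set G).Nonempty)
    (hS_gen : AddSubgroup.closure (S : Set G) = ⊤) (f : S → H)
    (hf : ∀ s t, f (s + t) = f s * f t) :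
    ∃ φ : Multiplicative G →* H, ∀ s : S, φ (.ofAdd s) = f s := by
  choose pos neg hsub using S.exists_eq_sub_of_closure_eq_top hS_ne hS_gen
  have hwd : ∀ (g : G) (s t : S), g = s - t → f (pos g) / f (neg g) = f s / f t := by
    intro g s t hg
    rw [div_eq_div_iff_mul_eq_mul, ← hf, ← hf]
    congr 1
    exact Subtype.ext (sub_eq_sub_iff_add_eq_add.mp ((hsub g).symm.trans hg))
  refine ⟨MonoidHom.mk' (fun g => f (pos g.toAdd) / f (neg g.toAdd)) fun g h => ?_, fun s => ?_⟩
  · rw [hwd _ (pos g.toAdd + pos h.toAdd) (neg g.toAdd + neg h.toAdd), hf, hf, mul_div_mul_comm]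
    rw [toAdd_mul, AddMemClass.coe_add, AddMemClass.coe_add, add_sub_add_comm, ← hsub, ← hsub]
  · rw [MonoidHom.mk'_apply, hwd _ (s + s) s (by simp), hf, mul_div_cancel_right]

variable {S}

theorem exists_hom_extension_of_isIdempotentElem {X : Type*} [CommSemigroup X] {e : X}
    (he : IsIdempotentElem e) (hdiv : ∀ x, ∃ y, e * x * y = e) (hS_ne : (S : Set G).Nonempty)
    (hS_gen : AddSubgroup.closure (S : Set G) = ⊤) (f : S → X)
    (hf : ∀ s t, f (s + t) = f s * f t) :
    ∃ U : G → X, (∀ g h, U (g + h) = U g * U h) ∧ U 0 = e ∧ ∀ s : S, U s = e * f s := by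
  let := he.fixedCommGroup hdiv
  let f' : S → {x : X // e * x = x} := fun s => ⟨e * f s, by rw [← mul_assoc, he.eq]⟩
  obtain ⟨φ, hφ⟩ := S.exists_monoidHom_extension hS_ne hS_gen f' fun s t => Subtype.ext <| by
    show e * f (s + t) = e * f s * (e * f t)
    rw [hf, mul_mul_mul_comm, he.eq]
  exact ⟨fun g => (φ (.ofAdd g) : X), fun g h => congrArg Subtype.val (map_mul φ _ _),
    congrArg Subtype.val (map_one φ), fun s => congrArg Subtype.val (hφ s)⟩

end AddSubsemigroup

theorem exists_hom_mem_closure_range {G : Type*} [AddCommGroup G] {S : AddSubsemigroup G}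
    {M : Type*} [Semigroup M] [TopologicalSpace M] [T2Space M] [SeparatelyContinuousMul M]
    (hS_ne : (S : Set G).Nonempty)
    (hS_gen : AddSubgroup.closure (S : Set G) = ⊤) (T : S → M)
    (hT : ∀ s t : S, T (s + t) = T s * T t) (hcpt : IsCompact (closure (Set.range T))) :
    ∃ U : G → M, (∀ g h, U (g + h) = U g * U h) ∧ (∀ t : S, U t = U 0 * T t) ∧
      (∀ (g : G) (t : S), U g * T t = T t * U g) ∧ ∀ g, U g ∈ closure (Set.range T) := by
  let R : Subsemigroup M :=
    { carrier := Set.range T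
      mul_mem' := by
        rintro - - ⟨s, rfl⟩ ⟨t, rfl⟩
        exact ⟨s + t, hT s t⟩ }
  let : CommSemigroup R.topologicalClosure := R.commSemigroupTopologicalClosure <| by
    rintro ⟨-, s, rfl⟩ ⟨-, t, rfl⟩
    exact Subtype.ext <| by
      show T s * T t = T t * T s
      rw [← hT, ← hT, add_comm]
  have : CompactSpace R.topologicalClosure := isCompact_iff_compactSpace.mp hcpt
  obtain ⟨t₀, ht₀⟩ := hS_ne
  have : Nonempty R.topologicalClosure := ⟨⟨T ⟨t₀, ht₀⟩, subset_closure ⟨_, rfl⟩⟩⟩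
  obtain ⟨e, he, hdiv⟩ :=
    exists_isIdempotentElem_forall_exists_mul_eq (X := R.topologicalClosure)
  obtain ⟨U, hU_add, hU_zero, hU_S⟩ := S.exists_hom_extension_of_isIdempotentElem he hdiv
    ⟨t₀, ht₀⟩ hS_gen (fun t => ⟨T t, subset_closure ⟨t, rfl⟩⟩) fun s t => Subtype.ext (hT s t)
  refine ⟨fun g => U g, fun g h => congrArg Subtype.val (hU_add g h), fun t => ?_,
    fun g t => congrArg Subtype.val (mul_comm (U g) ⟨T t, subset_closure ⟨t, rfl⟩⟩),
    fun g => (U g).2⟩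
  show (U t : M) = U 0 * T t
  rw [hU_S, hU_zero]
  rfl

theorem ContinuousLinearMap.exists_restrict_range {R F G : Type*} [Ring R] [AddCommGroup F]
    [Module R F] [TopologicalSpace F] [AddGroup G] (U : G → F →L[R] F)
    (hU : ∀ g h, U (g + h) = U g * U h) :
    ∃ V : G →
        (LinearMap.range (U 0 : F →ₗ[R] F) →L[R] LinearMap.range (U 0 : F →ₗ[R] F)),
      (∀ g h, V (g + h) = (V g).comp (V h)) ∧ (∀ g, Function.Bijective (V g)) ∧
        ∀ g x, (V g x : F) = U g x := by
  have hU0 : ∀ g x, U 0 (U g x) = U g x := fun g x => by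
    rw [← mul_apply_eq_comp, ← hU, zero_add]
  have hmaps : ∀ g, ∀ x ∈ LinearMap.range (U 0 : F →ₗ[R] F),
      U g x ∈ LinearMap.range (U 0 : F →ₗ[R] F) := fun g x _ => ⟨U g x, hU0 g x⟩
  have hinv : ∀ g g', g + g' = 0 →
      Function.LeftInverse ((U g).restrict (hmaps g)) ((U g').restrict (hmaps g')) := by
    rintro g g' hgg' ⟨-, y, rfl⟩
    refine Subtype.ext ?_
    show U g (U g' (U 0 y)) = U 0 y
    rw [← mul_apply_eq_comp, ← hU, hgg', hU0]
  refine ⟨fun g => (U g).restrict (hmaps g), fun g h => ?_, fun g => ?_, fun g x => rfl⟩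
  · ext x
    simp [hU]
  · exact ⟨(hinv (-g) g (neg_add_cancel g)).injective,
      (hinv g (-g) (add_neg_cancel g)).surjective⟩

theorem stmt_3_general
    {G : Type*} [AddCommGroup G]
    (S : AddSubsemigroup G)
    (hS_ne : (S : Set G).Nonempty)
    (hS_gen : AddSubgroup.closure (S : Set G) = ⊤)
    {E : Type*} [NormedAddCommGroup E] [Lattice E] [HasSolidNorm E] [IsOrderedAddMonoid E] [NormedSpace ℝ E]
    (T : S → (E →L[ℝ] E))
    (h_pos : ∀ (t : S) (x : E), 0 ≤ x → 0 ≤ T t x)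
    (h_sg : ∀ t s : S, T (t + s) = (T t).comp (T s))
    (h_bdd : ∃ M : ℝ, ∀ t : S, ‖T t‖ ≤ M)
    (h_orbit : ∀ x : E,
        IsCompact (closure ((toWeakSpace ℝ E) '' {z : E | ∃ t : S, z = T t x}))) :
    ∃ P : E →L[ℝ] E,
      (∀ x : E, P (P x) = P x) ∧
      (∀ x : E, 0 ≤ x → 0 ≤ P x) ∧
      (∀ t : S, P.comp (T t) = (T t).comp P) ∧
      (∀ x : E, (∀ t : S, T t x = x) → P x = x) ∧
      (∃ Srep : G → (LinearMap.range (P : E →ₗ[ℝ] E) →L[ℝ] LinearMap.range (P : E →ₗ[ℝ] E)),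
        (∀ (g : G) (x : LinearMap.range (P : E →ₗ[ℝ] E)), 0 ≤ (x : E) → 0 ≤ ((Srep g x : E))) ∧
        (∀ g : G, Function.Bijective (Srep g)) ∧
        (∀ g h : G, Srep (g + h) = (Srep g).comp (Srep h)) ∧
        (∃ M : ℝ, ∀ g : G, ‖Srep g‖ ≤ M) ∧
        (∀ (t : S) (x : LinearMap.range (P : E →ₗ[ℝ] E)), ((Srep (t : G) x : E)) = T t (x : E))) ∧
      (∀ x : E, P x = 0 →
        (0 : WeakSpace ℝ E) ∈
          closure ((toWeakSpace ℝ E) '' {z : E | ∃ t : S, z = T t x})) := by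
  obtain ⟨M, hM⟩ := h_bdd
  have hM0 : 0 ≤ M := (norm_nonneg _).trans (hM ⟨_, hS_ne.some_mem⟩)
  have horbit : ∀ x, toWeakSpace ℝ E '' {z | ∃ t : S, z = T t x} =
      range fun t => toWeakSpace ℝ E (T t x) := fun x => by
    ext
    simp [eq_comm]
  obtain ⟨U, hU_add, hU_S, hU_comm, hU_mem⟩ := exists_hom_mem_closure_range hS_ne hS_gen
    (fun t => ofCLM (T t)) (fun s t => congrArg ofCLM (h_sg s t))
    (isCompact_closure_range_ofCLM hM fun x => horbit x ▸ h_orbit x)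
  obtain ⟨V, hV_add, hV_bij, hV_apply⟩ := ContinuousLinearMap.exists_restrict_range
    (fun g => (U g).toCLM) fun g h => congrArg toCLM (hU_add g h)
  have hpos : ∀ g x, 0 ≤ x → 0 ≤ U g x := fun g x hx => apply_mem_of_mem_closure (hU_mem g)
    HasSolidNorm.convex_nonneg isClosed_nonneg fun t => h_pos t x hx
  have hPT : ∀ t : S, (U 0).toCLM.comp (T t) = (T t).comp (U 0).toCLM :=
    fun t => congrArg toCLM (hU_comm 0 t)
  have hP : ∀ x, U 0 (U 0 x) = U 0 x := fun x => by
    simpa using (DFunLike.congr_fun (hU_add 0 0) x).symm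
  refine ⟨(U 0).toCLM, hP, hpos 0, hPT, fun x hx => apply_mem_of_mem_closure (hU_mem 0)
      (convex_singleton x) isClosed_singleton hx,
    ⟨V, fun g x hx => (hV_apply g x).symm ▸ hpos g x hx, hV_bij, hV_add, ⟨M, fun g => ?_⟩,
      fun t x => ?_⟩, fun x hx => ?_⟩
  · exact ContinuousLinearMap.opNorm_le_bound _ hM0 fun x =>
      (congrArg norm (hV_apply g x)).trans_le (norm_apply_le_of_mem_closure (hU_mem g) hM x)
  · obtain ⟨y, hy⟩ := x.2
    rw [hV_apply, hU_S, ← hy]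
    exact (DFunLike.congr_fun (hPT t) _).trans (congrArg (T t) (hP y))
  · simpa [← horbit, show U 0 x = 0 from hx] using toWeakSpace_apply_mem_closure (hU_mem 0) x

/-- Banach-lattice version of the Jacobs–de Leeuw–Glicksberg splitting theorem for a
bounded positive representation of a commutative semigroup `S` (generating a group
`G`) with relatively weakly compact orbits. -/
theorem stmt_3
    {G : Type*} [AddCommGroup G]
    (S : AddSubsemigroup G)
    (hS_ne : (S : Set G).Nonempty)
    (hS_gen : AddSubgroup.closure (S : Set G) = ⊤)
    {E : Type*} [NormedAddCommGroup E] [Lattice E] [HasSolidNorm E] [IsOrderedAddMonoid E] [NormedSpace ℝ E] [CompleteSpace E]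
    (T : S → (E →L[ℝ] E))
    (h_pos : ∀ (t : S) (x : E), 0 ≤ x → 0 ≤ T t x)
    (h_sg : ∀ t s : S, T (t + s) = (T t).comp (T s))
    (h_bdd : ∃ M : ℝ, ∀ t : S, ‖T t‖ ≤ M)
    (h_orbit : ∀ x : E,
        IsCompact (closure ((toWeakSpace ℝ E) '' {z : E | ∃ t : S, z = T t x}))) :
    ∃ P : E →L[ℝ] E,
      (∀ x : E, P (P x) = P x) ∧
      (∀ x : E, 0 ≤ x → 0 ≤ P x) ∧
      (∀ t : S, P.comp (T t) = (T t).comp P) ∧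
      (∀ x : E, (∀ t : S, T t x = x) → P x = x) ∧
      (∃ Srep : G → (LinearMap.range (P : E →ₗ[ℝ] E) →L[ℝ] LinearMap.range (P : E →ₗ[ℝ] E)),
        (∀ (g : G) (x : LinearMap.range (P : E →ₗ[ℝ] E)), 0 ≤ (x : E) → 0 ≤ ((Srep g x : E))) ∧
        (∀ g : G, Function.Bijective (Srep g)) ∧
        (∀ g h : G, Srep (g + h) = (Srep g).comp (Srep h)) ∧
        (∃ M : ℝ, ∀ g : G, ‖Srep g‖ ≤ M) ∧
        (∀ (t : S) (x : LinearMap.range (P : E →ₗ[ℝ] E)), ((Srep (t : G) x : E)) = T t (x : E))) ∧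
      (∀ x : E, P x = 0 →
        (0 : WeakSpace ℝ E) ∈
          closure ((toWeakSpace ℝ E) '' {z : E | ∃ t : S, z = T t x})) :=
  stmt_3_general S hS_ne hS_gen T h_pos h_sg h_bdd h_orbit
end

section
/- Let G be a commutative additive group and let (T_t)_{t∈G} be a bounded group representation of G on a Banach space E, i.e. each T_t is a bounded linear operator, T_{t+s} = T_t ∘ T_s for all t,s ∈ G, T_0 = id, and sup_{t∈G} ‖T_t‖ < ∞. Let S ⊆ G be a nonempty subsemigroup whose generated subgroup is all of G. If for every x ∈ E there exists z ∈ E such that for every ε > 0 there is s ∈ S with ‖T_{s+t} x − z‖ ≤ ε for all t ∈ S (i.e. the representation (T_t)_{t∈S} is strongly convergent), then T_t = id_E for all t ∈ G. -/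
/-!
Let `z` be the limit of `T_t x` along `S`. Shifting the index by `u ∈ S` does not change the
limit, and `T_u` is uniformly bounded, so `T_u z = z` for `u ∈ S`; the elements fixing `z`
form a subgroup, hence `T_g z = z` for all `g ∈ G`. Then `x - z = T_{-g} (T_g x - z)` with
`‖T_{-g}‖ ≤ M` and `T_g x` arbitrarily close to `z`, so `x = z` and `T_g x = T_g z = z = x`.
-/

open Filter Topology

/-- `lim_{t ∈ S} f t = z` in the paper's notation. -/
def HasLimAlong {G E : Type*} [Add G] [SeminormedAddCommGroup E] (S : AddSubsemigroup G)
    (f : G → E) (z : E) : Prop :=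
  ∀ ε > 0, ∃ s : S, ∀ t : S, ‖f (s + t) - z‖ ≤ ε

theorem eq_of_forall_norm_sub_le_mul {E : Type*} [NormedAddCommGroup E] {a b : E} {C : ℝ}
    (h : ∀ ε > 0, ‖a - b‖ ≤ C * ε) : a = b := by
  rw [← sub_eq_zero, ← norm_le_zero_iff]
  have hlim : Tendsto (fun ε : ℝ => C * ε) (𝓝[>] 0) (𝓝 0) := by
    simpa using ((continuous_const_mul C).tendsto 0).mono_left nhdsWithin_le_nhds
  exact ge_of_tendsto hlim (eventually_nhdsWithin_of_forall h)

section Representation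

variable {R E : Type*} [Semiring R] [TopologicalSpace E] [AddCommMonoid E] [Module R E]

theorem apply_neg_apply {G : Type*} [AddGroup G] {T : G → E →L[R] E}
    (h_zero : T 0 = ContinuousLinearMap.id R E) (h_add : ∀ t s, T (t + s) = (T t).comp (T s))
    (t : G) (y : E) : T (-t) (T t y) = y := by
  rw [← ContinuousLinearMap.comp_apply, ← h_add, neg_add_cancel, h_zero,
    ContinuousLinearMap.id_apply]

theorem apply_eq_self_of_mem_closure {G : Type*} [AddGroup G] {T : G → E →L[R] E}
    (h_zero : T 0 = ContinuousLinearMap.id R E) (h_add : ∀ t s, T (t + s) = (T t).comp (T s))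
    {A : Set G} {z : E} (hA : ∀ a ∈ A, T a z = z) {g : G} (hg : g ∈ AddSubgroup.closure A) :
    T g z = z := by
  induction hg using AddSubgroup.closure_induction with
  | mem a ha => exact hA a ha
  | zero => rw [h_zero, ContinuousLinearMap.id_apply]
  | add a b _ _ ha hb => rw [h_add, ContinuousLinearMap.comp_apply, hb, ha]
  | neg a _ ha => simpa only [ha] using apply_neg_apply h_zero h_add a z

end Representation

section Bounded

variable {𝕜 G E : Type*} [NontriviallyNormedField 𝕜] [NormedAddCommGroup E] [NormedSpace 𝕜 E]
  [AddCommGroup G] {T : G → E →L[𝕜] E} {M : ℝ} {S : AddSubsemigroup G} {x z : E}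

theorem HasLimAlong.apply_eq_self (h_add : ∀ t s, T (t + s) = (T t).comp (T s))
    (hM : ∀ t, ‖T t‖ ≤ M) (hz : HasLimAlong S (fun g => T g x) z) {u : G} (hu : u ∈ S) :
    T u z = z := by
  refine eq_of_forall_norm_sub_le_mul (C := M + 1) fun ε hε => ?_
  obtain ⟨s, hs⟩ := hz ε hε
  have hshift : T u (T (s + s) x) = T (s + (u + s)) x := by
    rw [← ContinuousLinearMap.comp_apply, ← h_add, add_left_comm]
  -- both `s + s` and `s + (u + s)` are translates of `s` by elements of `S`
  have hsplit : T u z - z = T u (z - T (s + s) x) + (T (s + (u + s)) x - z) := by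
    rw [map_sub, hshift]; abel
  calc ‖T u z - z‖ ≤ ‖T u‖ * ‖z - T (s + s) x‖ + ‖T (s + (u + s)) x - z‖ := by
        rw [hsplit]; exact (norm_add_le _ _).trans (add_le_add_left ((T u).le_opNorm _) _)
    _ ≤ M * ε + ε := by
        gcongr
        · exact (norm_nonneg _).trans (hM u)
        · exact hM u
        · rw [norm_sub_rev]; exact hs s
        · exact hs ⟨u + s, S.add_mem hu s.2⟩
    _ = (M + 1) * ε := by ring

theorem HasLimAlong.eq_of_forall_apply_eq_self (h_zero : T 0 = ContinuousLinearMap.id 𝕜 E)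
    (h_add : ∀ t s, T (t + s) = (T t).comp (T s)) (hM : ∀ t, ‖T t‖ ≤ M)
    (hz : HasLimAlong S (fun g => T g x) z) (hfix : ∀ g, T g z = z) : x = z := by
  refine eq_of_forall_norm_sub_le_mul (C := M) fun ε hε => ?_
  obtain ⟨s, hs⟩ := hz ε hε
  have hpull : x - z = T (-(s + s)) (T (s + s) x - z) := by
    rw [map_sub, apply_neg_apply h_zero h_add, hfix]
  calc ‖x - z‖ ≤ ‖T (-(s + s))‖ * ‖T (s + s) x - z‖ := hpull ▸ (T _).le_opNorm _
    _ ≤ M * ε := by gcongr; exacts [(norm_nonneg _).trans (hM 0), hM _, hs s]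

end Bounded

theorem stmt_5_general
    {G : Type*} [AddCommGroup G]
    {E : Type*} [NormedAddCommGroup E] [NormedSpace ℝ E]
    (T : G → (E →L[ℝ] E))
    (h_zero : T 0 = ContinuousLinearMap.id ℝ E)
    (h_add : ∀ t s : G, T (t + s) = (T t).comp (T s))
    (h_bdd : ∃ M : ℝ, ∀ t : G, ‖T t‖ ≤ M)
    (S : AddSubsemigroup G)
    (hS_gen : AddSubgroup.closure (S : Set G) = ⊤)
    (h_conv : ∀ x : E, ∃ z : E, ∀ ε : ℝ, 0 < ε →
        ∃ s : S, ∀ t : S, ‖T ((s : G) + (t : G)) x - z‖ ≤ ε) :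
    ∀ t : G, T t = ContinuousLinearMap.id ℝ E := by
  obtain ⟨M, hM⟩ := h_bdd
  intro t
  ext x
  obtain ⟨z, hz⟩ : ∃ z, HasLimAlong S (fun g => T g x) z := h_conv x
  have hfix : ∀ g, T g z = z := fun g =>
    apply_eq_self_of_mem_closure h_zero h_add (fun u hu => hz.apply_eq_self h_add hM hu)
      (hS_gen ▸ AddSubgroup.mem_top g)
  rw [ContinuousLinearMap.id_apply, hz.eq_of_forall_apply_eq_self h_zero h_add hM hfix, hfix]

/-- If a bounded group representation of a commutative group `G` on a Banach space
restricts to a strongly convergent semigroup representation on a subsemigroup `S`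
generating `G`, then the representation is trivial. -/
theorem stmt_5
    {G : Type*} [AddCommGroup G]
    {E : Type*} [NormedAddCommGroup E] [NormedSpace ℝ E] [CompleteSpace E]
    (T : G → (E →L[ℝ] E))
    (h_zero : T 0 = ContinuousLinearMap.id ℝ E)
    (h_add : ∀ t s : G, T (t + s) = (T t).comp (T s))
    (h_bdd : ∃ M : ℝ, ∀ t : G, ‖T t‖ ≤ M)
    (S : AddSubsemigroup G)
    (hS_ne : (S : Set G).Nonempty)
    (hS_gen : AddSubgroup.closure (S : Set G) = ⊤)
    (h_conv : ∀ x : E, ∃ z : E, ∀ ε : ℝ, 0 < ε →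
        ∃ s : S, ∀ t : S, ‖T ((s : G) + (t : G)) x - z‖ ≤ ε) :
    ∀ t : G, T t = ContinuousLinearMap.id ℝ E :=
  stmt_5_general T h_zero h_add h_bdd S hS_gen h_conv
end

section
/- Let E be a Banach lattice whose norm is strictly monotone, meaning ‖f‖ < ‖g‖ whenever 0 ≤ f ≤ g and f ≠ g. Let S be a semigroup and (T_t)_{t∈S} a family of positive bounded linear operators on E with T_{ts} = T_t ∘ T_s and ‖T_t‖ ≤ 1 for every t ∈ S. Then every super fixed point of the family is a fixed point (i.e. if x ≥ 0 and T_t x ≥ x for all t ∈ S, then T_t x = x for all t ∈ S), and the fixed space is a sublattice: if T_t x = x for all t ∈ S, then T_t |x| = |x| for all t ∈ S. -/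
/-!
A contraction cannot push a positive vector strictly upwards when the norm is strictly monotone,
since that would increase its norm; so super fixed points are fixed. For a fixed point `x` of a
positive operator `T`, positivity gives `|x| = |T x| ≤ T |x|`, so `|x|` is a super fixed point and
hence fixed.
-/

def HasStrictlyMonotoneNorm (E : Type*) [Norm E] [Preorder E] [Zero E] : Prop :=
  ∀ f g : E, 0 ≤ f → f ≤ g → f ≠ g → ‖f‖ < ‖g‖

theorem abs_map_le_map_abs_s8 {α β F : Type*} [AddCommGroup α] [Lattice α] [IsOrderedAddMonoid α]
    [AddCommGroup β] [Lattice β] [IsOrderedAddMonoid β] [FunLike F α β] [AddMonoidHomClass F α β]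
    {f : F} (hf : Monotone f) (x : α) : |f x| ≤ f |x| :=
  abs_le'.2 ⟨hf (le_abs_self x), by rw [← map_neg]; exact hf (neg_le_abs x)⟩

namespace ContinuousLinearMap

variable {𝕜 E : Type*} [NontriviallyNormedField 𝕜] [NormedAddCommGroup E] [NormedSpace 𝕜 E]
  {T : E →L[𝕜] E}

theorem apply_eq_of_le_apply [Preorder E] (hE : HasStrictlyMonotoneNorm E) (hT : ‖T‖ ≤ 1) {x : E}
    (hx : 0 ≤ x) (hxT : x ≤ T x) : T x = x := by
  by_contra hne
  have hnorm : ‖T x‖ ≤ ‖x‖ := (T.le_of_opNorm_le hT x).trans_eq (one_mul _)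
  exact (hE x (T x) hx hxT (Ne.symm hne)).not_ge hnorm

theorem apply_abs_eq_of_apply_eq [Lattice E] [IsOrderedAddMonoid E]
    (hE : HasStrictlyMonotoneNorm E) (hT : ‖T‖ ≤ 1) (hmono : Monotone T) {x : E} (hx : T x = x) : T |x| = |x| :=
  apply_eq_of_le_apply hE hT (abs_nonneg x) (by simpa only [hx] using abs_map_le_map_abs_s8 hmono x)

end ContinuousLinearMap

theorem stmt_8_general
    {E : Type*} [NormedAddCommGroup E] [Lattice E] [IsOrderedAddMonoid E] [NormedSpace ℝ E]
    (h_strict : ∀ f g : E, 0 ≤ f → f ≤ g → f ≠ g → ‖f‖ < ‖g‖)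
    {S : Type*}
    (T : S → (E →L[ℝ] E))
    (h_pos : ∀ (t : S) (x : E), 0 ≤ x → 0 ≤ T t x)
    (h_contr : ∀ t : S, ‖T t‖ ≤ 1) :
    (∀ x : E, 0 ≤ x → (∀ t : S, x ≤ T t x) → ∀ t : S, T t x = x) ∧
    (∀ x : E, (∀ t : S, T t x = x) → ∀ t : S, T t |x| = |x|) :=
  ⟨fun _ hx hsup t => (T t).apply_eq_of_le_apply h_strict (h_contr t) hx (hsup t),
    fun _ hfix t => (T t).apply_abs_eq_of_apply_eq h_strict (h_contr t)
      ((monotone_iff_map_nonneg (T t)).2 (h_pos t)) (hfix t)⟩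

/-- On a Banach lattice with strictly monotone norm, for a semigroup of positive
contractions every super fixed point is a fixed point and the fixed space is a
sublattice. -/
theorem stmt_8
    {E : Type*} [NormedAddCommGroup E] [Lattice E] [HasSolidNorm E] [IsOrderedAddMonoid E] [NormedSpace ℝ E] [CompleteSpace E]
    (h_strict : ∀ f g : E, 0 ≤ f → f ≤ g → f ≠ g → ‖f‖ < ‖g‖)
    {S : Type*} [Semigroup S]
    (T : S → (E →L[ℝ] E))
    (h_pos : ∀ (t : S) (x : E), 0 ≤ x → 0 ≤ T t x)
    (h_sg : ∀ t s : S, T (t * s) = (T t).comp (T s))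
    (h_contr : ∀ t : S, ‖T t‖ ≤ 1) :
    (∀ x : E, 0 ≤ x → (∀ t : S, x ≤ T t x) → ∀ t : S, T t x = x) ∧
    (∀ x : E, (∀ t : S, T t x = x) → ∀ t : S, T t |x| = |x|) :=
  stmt_8_general h_strict T h_pos h_contr
end

section
/- Let E be a Banach lattice, S a semigroup, and (T_t)_{t∈S} a family of positive bounded linear operators on E with T_{ts} = T_t ∘ T_s and sup_{t∈S} ‖T_t‖ < ∞. Suppose there exists a continuous linear functional φ on E which is strictly positive (φ(f) > 0 for every f ≥ 0 with f ≠ 0) and satisfies φ(T_t f) ≤ φ(f) for every f ≥ 0 and every t ∈ S. Then every super fixed point is a fixed point (if x ≥ 0 and T_t x ≥ x for all t ∈ S, then T_t x = x for all t ∈ S), and the fixed space is a sublattice: if T_t x = x for all t ∈ S, then T_t |x| = |x| for all t ∈ S. -/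
/-!
For a super fixed point `x` the vector `T t x - x` is positive, while strict positivity of `φ` and
`φ (T t x) ≤ φ x` force it to vanish. If `T t x = x` for all `t`, positivity gives
`|x| = |T t x| ≤ T t |x|`, so `|x|` is a super fixed point, hence a fixed point.
-/

section PositiveMap

variable {E F G : Type*} [AddCommGroup E] [Lattice E] [IsOrderedAddMonoid E]
  [AddCommGroup F] [Lattice F] [IsOrderedAddMonoid F] [FunLike G E F] [AddMonoidHomClass G E F]

theorem monotone_of_map_nonneg {T : G} (hT : ∀ x, 0 ≤ x → 0 ≤ T x) : Monotone T := by
  intro x y hxy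
  simpa only [map_sub, sub_nonneg] using hT (y - x) (sub_nonneg.2 hxy)

theorem abs_apply_le_apply_abs {T : G} (hT : ∀ x, 0 ≤ x → 0 ≤ T x) (x : E) :
    |T x| ≤ T |x| := by
  have hmono := monotone_of_map_nonneg hT
  refine abs_le'.2 ⟨hmono (le_abs_self x), ?_⟩
  rw [← map_neg]
  exact hmono (neg_le_abs x)

end PositiveMap

theorem eq_of_le_of_strictly_positive_of_map_le {E F H : Type*} [AddCommGroup E] [PartialOrder E]
    [IsOrderedAddMonoid E] [AddCommGroup H] [PartialOrder H] [IsOrderedAddMonoid H]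
    [FunLike F E H] [AddMonoidHomClass F E H] {φ : F} (hφ : ∀ f, 0 ≤ f → f ≠ 0 → 0 < φ f)
    {x y : E} (hxy : x ≤ y) (hφxy : φ y ≤ φ x) : y = x := by
  by_contra hne
  have hpos : 0 < φ (y - x) := hφ _ (sub_nonneg.2 hxy) (sub_ne_zero.2 hne)
  rw [map_sub, sub_pos] at hpos
  exact hpos.not_ge hφxy

theorem stmt_9_general
    {E : Type*} [NormedAddCommGroup E] [Lattice E] [IsOrderedAddMonoid E] [NormedSpace ℝ E]
    {S : Type*}
    (T : S → (E →L[ℝ] E))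
    (h_pos : ∀ (t : S) (x : E), 0 ≤ x → 0 ≤ T t x)
    (φ : E →L[ℝ] ℝ)
    (hφ_strict : ∀ f : E, 0 ≤ f → f ≠ 0 → 0 < φ f)
    (hφ_dec : ∀ (t : S) (f : E), 0 ≤ f → φ (T t f) ≤ φ f) :
    (∀ x : E, 0 ≤ x → (∀ t : S, x ≤ T t x) → ∀ t : S, T t x = x) ∧
    (∀ x : E, (∀ t : S, T t x = x) → ∀ t : S, T t |x| = |x|) := by
  have super_fixed : ∀ x : E, 0 ≤ x → (∀ t : S, x ≤ T t x) → ∀ t : S, T t x = x :=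
    fun x hx hsup t => eq_of_le_of_strictly_positive_of_map_le hφ_strict (hsup t) (hφ_dec t x hx)
  refine ⟨super_fixed, fun x hfix => super_fixed |x| (abs_nonneg x) fun s => ?_⟩
  calc |x| = |T s x| := by rw [hfix s]
    _ ≤ T s |x| := abs_apply_le_apply_abs (h_pos s) x

/-- If a bounded semigroup of positive operators on a Banach lattice admits a
strictly positive continuous linear functional `φ` with `φ ∘ T_t ≤ φ` on the
positive cone, then every super fixed point is a fixed point and the fixed space
is a sublattice. -/
theorem stmt_9
    {E : Type*} [NormedAddCommGroup E] [Lattice E] [HasSolidNorm E] [IsOrderedAddMonoid E] [NormedSpace ℝ E] [CompleteSpace E]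
    {S : Type*} [Semigroup S]
    (T : S → (E →L[ℝ] E))
    (h_pos : ∀ (t : S) (x : E), 0 ≤ x → 0 ≤ T t x)
    (h_sg : ∀ t s : S, T (t * s) = (T t).comp (T s))
    (h_bdd : ∃ M : ℝ, ∀ t : S, ‖T t‖ ≤ M)
    (φ : E →L[ℝ] ℝ)
    (hφ_strict : ∀ f : E, 0 ≤ f → f ≠ 0 → 0 < φ f)
    (hφ_dec : ∀ (t : S) (f : E), 0 ≤ f → φ (T t f) ≤ φ f) :
    (∀ x : E, 0 ≤ x → (∀ t : S, x ≤ T t x) → ∀ t : S, T t x = x) ∧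
    (∀ x : E, (∀ t : S, T t x = x) → ∀ t : S, T t |x| = |x|) :=
  stmt_9_general T h_pos φ hφ_strict hφ_dec
end

section
/- Let E be a complex Banach space and let (T_t)_{t∈(0,∞)} be a one-parameter semigroup of bounded linear operators on E with T_{t+s} = T_t ∘ T_s for all t, s > 0 and sup_{t>0} ‖T_t‖ < ∞. Let λ : (0,∞) → ℂ satisfy |λ_t| = 1 for all t > 0, and suppose there exists x ∈ E, x ≠ 0, with T_t x = λ_t x for all t > 0. Then λ is also an eigenvalue of the dual semigroup: there exists a continuous linear functional φ on E with φ ≠ 0 such that φ(T_t y) = λ_t · φ(y) for all y ∈ E and all t > 0. -/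
/-!
Rescaling by `conj λ_t` turns `x` into a common fixed vector of the bounded semigroup
`U_t = conj λ_t • T_t`. For the equivalent norm `y ↦ sup_{S ∈ {1} ∪ {U_t}} ‖S y‖` every `U_t` and
every Cesàro mean `(1/n) ∑_{k<n} U_t^k` is a contraction, and the mean sends `U_t y - y` to
`(U_t^n y - y) / n`. Products of such means therefore fix `x` while making any element of
`span {U_t y - y}` arbitrarily small, so `x` has positive distance from that span, and Hahn–Banach
gives a functional vanishing on it but not at `x`.
-/

open Finset Set

namespace OperatorSemigroup

variable {𝕜 E : Type*} [RCLike 𝕜] [NormedAddCommGroup E] [NormedSpace 𝕜 E]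

noncomputable def orbitSeminorm (𝒮 : Submonoid (E →L[𝕜] E)) : Seminorm 𝕜 E :=
  ⨆ S : 𝒮, (normSeminorm 𝕜 E).comp (S : E →L[𝕜] E).toLinearMap

section orbitSeminorm

variable {𝒮 : Submonoid (E →L[𝕜] E)} {M : ℝ}

theorem orbitSeminorm_apply (hM : ∀ S ∈ 𝒮, ‖S‖ ≤ M) (y : E) :
    orbitSeminorm 𝒮 y = ⨆ S : 𝒮, ‖(S : E →L[𝕜] E) y‖ := by
  refine Seminorm.iSup_apply (Seminorm.bddAbove_range_iff.mpr fun y ↦ ⟨M * ‖y‖, ?_⟩)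
  rintro _ ⟨S, rfl⟩
  exact (S.1.le_opNorm y).trans (by gcongr; exact hM S S.2)

theorem norm_apply_le_orbitSeminorm (hM : ∀ S ∈ 𝒮, ‖S‖ ≤ M) {S : E →L[𝕜] E} (hS : S ∈ 𝒮)
    (y : E) : ‖S y‖ ≤ orbitSeminorm 𝒮 y := by
  rw [orbitSeminorm_apply hM]
  refine le_ciSup (f := fun S : 𝒮 ↦ ‖(S : E →L[𝕜] E) y‖) ⟨M * ‖y‖, ?_⟩ ⟨S, hS⟩
  rintro _ ⟨S, rfl⟩
  exact (S.1.le_opNorm y).trans (by gcongr; exact hM S S.2)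

theorem norm_le_orbitSeminorm (hM : ∀ S ∈ 𝒮, ‖S‖ ≤ M) (y : E) : ‖y‖ ≤ orbitSeminorm 𝒮 y :=
  norm_apply_le_orbitSeminorm hM 𝒮.one_mem y

theorem orbitSeminorm_le (hM : ∀ S ∈ 𝒮, ‖S‖ ≤ M) (y : E) : orbitSeminorm 𝒮 y ≤ M * ‖y‖ := by
  rw [orbitSeminorm_apply hM]
  exact ciSup_le fun S ↦ (S.1.le_opNorm y).trans (by gcongr; exact hM S S.2)

theorem orbitSeminorm_apply_le (hM : ∀ S ∈ 𝒮, ‖S‖ ≤ M) {S : E →L[𝕜] E} (hS : S ∈ 𝒮) (y : E) :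
    orbitSeminorm 𝒮 (S y) ≤ orbitSeminorm 𝒮 y := by
  rw [orbitSeminorm_apply hM]
  exact ciSup_le fun R ↦ norm_apply_le_orbitSeminorm hM (𝒮.mul_mem R.2 hS) y

end orbitSeminorm

def commutingContractions (𝒮 : Submonoid (E →L[𝕜] E)) (x : E) : Submonoid (E →L[𝕜] E) where
  carrier := {B | (∀ S ∈ 𝒮, Commute B S) ∧ B x = x ∧
    ∀ y, orbitSeminorm 𝒮 (B y) ≤ orbitSeminorm 𝒮 y}
  mul_mem' := fun {B C} ⟨hB_comm, hB_fix, hB_le⟩ ⟨hC_comm, hC_fix, hC_le⟩ ↦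
    ⟨fun S hS ↦ (hB_comm S hS).mul_left (hC_comm S hS), by simp [hB_fix, hC_fix],
      fun y ↦ (hB_le (C y)).trans (hC_le y)⟩
  one_mem' := ⟨fun S _ ↦ Commute.one_left S, rfl, fun _ ↦ le_rfl⟩

noncomputable def cesaroMean (S : E →L[𝕜] E) (n : ℕ) : E →L[𝕜] E :=
  (n : 𝕜)⁻¹ • ∑ k ∈ range n, S ^ k

theorem cesaroMean_mul_sub_one (S : E →L[𝕜] E) (n : ℕ) :
    cesaroMean S n * (S - 1) = (n : 𝕜)⁻¹ • (S ^ n - 1) := by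
  rw [cesaroMean, smul_mul_assoc, geom_sum_mul]

section cesaroMean

variable {𝒮 : Submonoid (E →L[𝕜] E)} {M : ℝ}

theorem orbitSeminorm_cesaroMean_le (hM : ∀ S ∈ 𝒮, ‖S‖ ≤ M) {S : E →L[𝕜] E} (hS : S ∈ 𝒮)
    (n : ℕ) (y : E) : orbitSeminorm 𝒮 (cesaroMean S n y) ≤ orbitSeminorm 𝒮 y := by
  rcases n.eq_zero_or_pos with rfl | hn
  · simp [cesaroMean]
  calc orbitSeminorm 𝒮 (cesaroMean S n y)
      ≤ (n : ℝ)⁻¹ * ∑ k ∈ range n, orbitSeminorm 𝒮 ((S ^ k) y) := by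
        rw [cesaroMean, smul_apply, map_smul_eq_mul, norm_inv,
          RCLike.norm_natCast, _root_.sum_apply]
        gcongr
        exact le_sum_of_subadditive _ (map_zero _).le (map_add_le_add _) _ _
    _ ≤ (n : ℝ)⁻¹ * ∑ _k ∈ range n, orbitSeminorm 𝒮 y := by
        gcongr with k
        exact orbitSeminorm_apply_le hM (pow_mem hS k) y
    _ = orbitSeminorm 𝒮 y := by
        rw [sum_const, card_range, nsmul_eq_mul, ← mul_assoc,
          inv_mul_cancel₀ (by positivity), one_mul]

theorem cesaroMean_apply_of_forall_apply_eq {S : E →L[𝕜] E} {x : E} (hx : ∀ k, (S ^ k) x = x)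
    {n : ℕ} (hn : n ≠ 0) : cesaroMean S n x = x := by
  simp only [cesaroMean, smul_apply, _root_.sum_apply, hx,
    sum_const, card_range, ← Nat.cast_smul_eq_nsmul 𝕜, smul_smul]
  rw [inv_mul_cancel₀ (Nat.cast_ne_zero.mpr hn), one_smul]

theorem cesaroMean_mem_commutingContractions
    (h_comm : ∀ S ∈ 𝒮, ∀ R ∈ 𝒮, Commute S R) (hM : ∀ S ∈ 𝒮, ‖S‖ ≤ M)
    {x : E} (hfix : ∀ S ∈ 𝒮, S x = x) {S : E →L[𝕜] E} (hS : S ∈ 𝒮) {n : ℕ} (hn : n ≠ 0) :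
    cesaroMean S n ∈ commutingContractions 𝒮 x :=
  ⟨fun R hR ↦ (Commute.sum_left _ _ _ fun k _ ↦ (h_comm S hS R hR).pow_left k).smul_left _,
    cesaroMean_apply_of_forall_apply_eq (fun k ↦ hfix _ (pow_mem hS k)) hn,
    orbitSeminorm_cesaroMean_le hM hS n⟩

theorem orbitSeminorm_cesaroMean_sub_le (hM : ∀ S ∈ 𝒮, ‖S‖ ≤ M) {S : E →L[𝕜] E} (hS : S ∈ 𝒮)
    (n : ℕ) (y : E) : orbitSeminorm 𝒮 (cesaroMean S n (S y - y)) ≤ 2 / n * orbitSeminorm 𝒮 y := by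
  have h_tel : cesaroMean S n (S y - y) = (n : 𝕜)⁻¹ • ((S ^ n) y - y) := by
    simpa using congr($(cesaroMean_mul_sub_one S n) y)
  calc orbitSeminorm 𝒮 (cesaroMean S n (S y - y))
      ≤ (n : ℝ)⁻¹ * (orbitSeminorm 𝒮 ((S ^ n) y) + orbitSeminorm 𝒮 y) := by
        rw [h_tel, map_smul_eq_mul, norm_inv, RCLike.norm_natCast]
        gcongr
        exact map_sub_le_add _ _ _
    _ ≤ (n : ℝ)⁻¹ * (orbitSeminorm 𝒮 y + orbitSeminorm 𝒮 y) := by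
        gcongr
        exact orbitSeminorm_apply_le hM (pow_mem hS n) y
    _ = 2 / n * orbitSeminorm 𝒮 y := by ring

end cesaroMean

def coboundaries (𝒮 : Submonoid (E →L[𝕜] E)) : Submodule 𝕜 E :=
  Submodule.span 𝕜 {w | ∃ S ∈ 𝒮, ∃ y, S y - y = w}

section coboundaries

variable {𝒮 : Submonoid (E →L[𝕜] E)} {M : ℝ} {x : E}

theorem exists_cesaroMean_orbitSeminorm_le
    (h_comm : ∀ S ∈ 𝒮, ∀ R ∈ 𝒮, Commute S R) (hM : ∀ S ∈ 𝒮, ‖S‖ ≤ M)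
    (hfix : ∀ S ∈ 𝒮, S x = x) {S : E →L[𝕜] E} (hS : S ∈ 𝒮) (y : E) {ε : ℝ} (hε : 0 < ε) :
    ∃ B ∈ commutingContractions 𝒮 x,
      ∀ C ∈ commutingContractions 𝒮 x, orbitSeminorm 𝒮 (B (C (S y - y))) ≤ ε := by
  obtain ⟨n, hn⟩ := exists_nat_gt (2 * orbitSeminorm 𝒮 y / ε)
  have hn_pos : (0 : ℝ) < n := (div_nonneg (by positivity) hε.le).trans_lt hn
  refine ⟨cesaroMean S n, cesaroMean_mem_commutingContractions h_comm hM hfix hS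
    (Nat.cast_pos.mp hn_pos).ne', fun C ⟨hC_comm, _, hC_le⟩ ↦ ?_⟩
  have hCS : C (S y - y) = S (C y) - C y := by
    rw [map_sub, ← mul_apply_eq_comp, hC_comm S hS, mul_apply_eq_comp]
  calc orbitSeminorm 𝒮 (cesaroMean S n (C (S y - y)))
      ≤ 2 / n * orbitSeminorm 𝒮 (C y) := hCS ▸ orbitSeminorm_cesaroMean_sub_le hM hS n (C y)
    _ ≤ 2 / n * orbitSeminorm 𝒮 y := by gcongr; exact hC_le y
    _ ≤ ε := by
        rw [div_mul_eq_mul_div, div_le_iff₀ hn_pos]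
        rw [div_lt_iff₀ hε] at hn
        linarith

/- Quantifying over an arbitrary `C` applied first makes the property stable under sums, although
the operators in `commutingContractions 𝒮 x` need not commute with each other. -/
theorem exists_orbitSeminorm_le_of_mem_coboundaries
    (h_comm : ∀ S ∈ 𝒮, ∀ R ∈ 𝒮, Commute S R) (hM : ∀ S ∈ 𝒮, ‖S‖ ≤ M)
    (hfix : ∀ S ∈ 𝒮, S x = x) {z : E} (hz : z ∈ coboundaries 𝒮) {ε : ℝ} (hε : 0 < ε) :
    ∃ B ∈ commutingContractions 𝒮 x,
      ∀ C ∈ commutingContractions 𝒮 x, orbitSeminorm 𝒮 (B (C z)) ≤ ε := by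
  induction hz using Submodule.span_induction generalizing ε with
  | mem w hw =>
    obtain ⟨S, hS, y, rfl⟩ := hw
    exact exists_cesaroMean_orbitSeminorm_le h_comm hM hfix hS y hε
  | zero => exact ⟨1, one_mem _, fun C _ ↦ by simpa using hε.le⟩
  | add z₁ z₂ _ _ ih₁ ih₂ =>
    obtain ⟨B₁, hB₁, h₁⟩ := ih₁ (half_pos hε)
    obtain ⟨B₂, hB₂, h₂⟩ := ih₂ (half_pos hε)
    refine ⟨B₁ * B₂, mul_mem hB₁ hB₂, fun C hC ↦ ?_⟩
    calc orbitSeminorm 𝒮 ((B₁ * B₂) (C (z₁ + z₂)))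
        ≤ orbitSeminorm 𝒮 (B₁ ((B₂ * C) z₁)) + orbitSeminorm 𝒮 (B₁ (B₂ (C z₂))) := by
          simpa only [map_add, mul_apply_eq_comp] using map_add_le_add _ _ _
      _ ≤ ε / 2 + ε / 2 :=
          add_le_add (h₁ _ (mul_mem hB₂ hC)) ((hB₁.2.2 _).trans (h₂ C hC))
      _ = ε := add_halves ε
  | smul a z _ ih =>
    obtain ⟨B, hB, h⟩ := ih (ε := ε / (‖a‖ + 1)) (by positivity)
    refine ⟨B, hB, fun C hC ↦ ?_⟩
    calc orbitSeminorm 𝒮 (B (C (a • z))) = ‖a‖ * orbitSeminorm 𝒮 (B (C z)) := by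
          rw [map_smul, map_smul, map_smul_eq_mul]
      _ ≤ ‖a‖ * (ε / (‖a‖ + 1)) := by gcongr; exact h C hC
      _ ≤ ε := by
          rw [mul_div_assoc', div_le_iff₀ (by positivity)]
          nlinarith [norm_nonneg a]

theorem norm_le_mul_norm_sub_of_mem_coboundaries
    (h_comm : ∀ S ∈ 𝒮, ∀ R ∈ 𝒮, Commute S R) (hM : ∀ S ∈ 𝒮, ‖S‖ ≤ M)
    (hfix : ∀ S ∈ 𝒮, S x = x) {z : E} (hz : z ∈ coboundaries 𝒮) : ‖x‖ ≤ M * ‖x - z‖ := by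
  refine le_of_forall_pos_le_add fun ε hε ↦ ?_
  obtain ⟨B, ⟨-, hBx, hB_le⟩, hBz⟩ :=
    exists_orbitSeminorm_le_of_mem_coboundaries h_comm hM hfix hz hε
  calc ‖x‖ ≤ orbitSeminorm 𝒮 (B (x - z) + B z) := by
        rw [← map_add, sub_add_cancel, hBx]; exact norm_le_orbitSeminorm hM x
    _ ≤ orbitSeminorm 𝒮 (x - z) + ε :=
        (map_add_le_add _ _ _).trans (add_le_add (hB_le _) (hBz 1 (one_mem _)))
    _ ≤ M * ‖x - z‖ + ε := by gcongr; exact orbitSeminorm_le hM _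

theorem notMem_topologicalClosure_coboundaries
    (h_comm : ∀ S ∈ 𝒮, ∀ R ∈ 𝒮, Commute S R) (hM : ∀ S ∈ 𝒮, ‖S‖ ≤ M)
    (hfix : ∀ S ∈ 𝒮, S x = x) (hx : x ≠ 0) : x ∉ (coboundaries 𝒮).topologicalClosure := by
  intro hx_mem
  have h_closed : IsClosed {z : E | ‖x‖ ≤ M * ‖x - z‖} :=
    isClosed_le continuous_const (by fun_prop)
  have h_sub : closure (coboundaries 𝒮 : Set E) ⊆ {z : E | ‖x‖ ≤ M * ‖x - z‖} :=
    h_closed.closure_subset_iff.mpr fun z hz ↦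
      norm_le_mul_norm_sub_of_mem_coboundaries h_comm hM hfix hz
  have hx_le : ‖x‖ ≤ M * ‖x - x‖ := h_sub hx_mem
  rw [sub_self, norm_zero, mul_zero] at hx_le
  exact hx (norm_le_zero_iff.mp hx_le)

theorem exists_dual_apply_ne_zero_forall_apply_eq
    (h_comm : ∀ S ∈ 𝒮, ∀ R ∈ 𝒮, Commute S R) (hM : ∀ S ∈ 𝒮, ‖S‖ ≤ M)
    (hfix : ∀ S ∈ 𝒮, S x = x) (hx : x ≠ 0) :
    ∃ φ : StrongDual 𝕜 E, φ x ≠ 0 ∧ ∀ S ∈ 𝒮, ∀ y, φ (S y) = φ y := by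
  set p := (coboundaries 𝒮).topologicalClosure
  have : IsClosed (p : Set E) := Submodule.isClosed_topologicalClosure _
  have hx_quot : p.mkQ x ≠ 0 := by
    simpa [Submodule.mkQ_apply, Submodule.Quotient.mk_eq_zero] using
      notMem_topologicalClosure_coboundaries h_comm hM hfix hx
  obtain ⟨f, hf⟩ := SeparatingDual.exists_ne_zero (R := 𝕜) hx_quot
  refine ⟨f.comp p.mkQL, by simpa using hf, fun S hS y ↦ ?_⟩
  have hSy : S y - y ∈ p :=
    (coboundaries 𝒮).le_topologicalClosure (Submodule.subset_span ⟨S, hS, y, rfl⟩)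
  rw [← sub_eq_zero, ← map_sub, ContinuousLinearMap.comp_apply, Submodule.mkQL_apply,
    Submodule.mkQ_apply, (Submodule.Quotient.mk_eq_zero p).mpr hSy, map_zero]

end coboundaries

def semigroupSubmonoid (U : ℝ → E →L[𝕜] E)
    (hU : ∀ t s : ℝ, 0 < t → 0 < s → U (t + s) = U t * U s) : Submonoid (E →L[𝕜] E) where
  carrier := insert 1 (U '' Ioi 0)
  mul_mem' := by
    rintro _ _ (rfl | ⟨t, ht, rfl⟩) (rfl | ⟨s, hs, rfl⟩)
    · simp
    · simpa using Or.inr ⟨s, hs, rfl⟩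
    · simpa using Or.inr ⟨t, ht, rfl⟩
    · exact Or.inr ⟨t + s, mem_Ioi.mpr (add_pos ht hs), hU t s ht hs⟩
  one_mem' := mem_insert _ _

theorem exists_dual_apply_ne_zero_of_forall_apply_eq_self (U : ℝ → E →L[𝕜] E)
    (hU : ∀ t s : ℝ, 0 < t → 0 < s → U (t + s) = U t * U s) {M : ℝ}
    (hM : ∀ t : ℝ, 0 < t → ‖U t‖ ≤ M) {x : E} (hx : x ≠ 0) (hfix : ∀ t : ℝ, 0 < t → U t x = x) :
    ∃ φ : StrongDual 𝕜 E, φ x ≠ 0 ∧ ∀ t : ℝ, 0 < t → ∀ y, φ (U t y) = φ y := by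
  have h_comm : ∀ S ∈ semigroupSubmonoid U hU, ∀ R ∈ semigroupSubmonoid U hU, Commute S R := by
    rintro _ (rfl | ⟨t, ht, rfl⟩) _ (rfl | ⟨s, hs, rfl⟩)
    · exact Commute.one_left 1
    · exact Commute.one_left _
    · exact Commute.one_right _
    · rw [Commute, SemiconjBy, ← hU t s ht hs, ← hU s t hs ht, add_comm]
  have h_bdd : ∀ S ∈ semigroupSubmonoid U hU, ‖S‖ ≤ max 1 M := by
    rintro _ (rfl | ⟨t, ht, rfl⟩)
    · exact ContinuousLinearMap.norm_id_le.trans (le_max_left _ _)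
    · exact (hM t ht).trans (le_max_right _ _)
  have h_fix : ∀ S ∈ semigroupSubmonoid U hU, S x = x := by
    rintro _ (rfl | ⟨t, ht, rfl⟩)
    · rfl
    · exact hfix t ht
  obtain ⟨φ, hφx, hφ⟩ := exists_dual_apply_ne_zero_forall_apply_eq h_comm h_bdd h_fix hx
  exact ⟨φ, hφx, fun t ht ↦ hφ (U t) (Or.inr ⟨t, ht, rfl⟩)⟩

theorem eigenvalue_add {T : ℝ → E →L[𝕜] E}
    (h_sg : ∀ t s : ℝ, 0 < t → 0 < s → T (t + s) = T t * T s) {lam : ℝ → 𝕜} {x : E} (hx : x ≠ 0)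
    (h_eig : ∀ t : ℝ, 0 < t → T t x = lam t • x) {t s : ℝ} (ht : 0 < t) (hs : 0 < s) :
    lam (t + s) = lam t * lam s :=
  smul_left_injective 𝕜 hx <| by
    simp only [← h_eig _ (add_pos ht hs), h_sg t s ht hs, mul_apply_eq_comp, h_eig s hs, map_smul,
      h_eig t ht, smul_smul, mul_comm (lam t)]

end OperatorSemigroup

open OperatorSemigroup in
theorem stmt_16_general
    {E : Type*} [NormedAddCommGroup E] [NormedSpace ℂ E]
    (T : ℝ → (E →L[ℂ] E))
    (h_sg : ∀ t s : ℝ, 0 < t → 0 < s → T (t + s) = (T t).comp (T s))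
    (h_bdd : ∃ M : ℝ, ∀ t : ℝ, 0 < t → ‖T t‖ ≤ M)
    (lam : ℝ → ℂ) (h_uni : ∀ t : ℝ, 0 < t → ‖lam t‖ = 1)
    (x : E) (hx : x ≠ 0)
    (h_eig : ∀ t : ℝ, 0 < t → T t x = lam t • x) :
    ∃ φ : E →L[ℂ] ℂ, φ ≠ 0 ∧
      ∀ t : ℝ, 0 < t → ∀ y : E, φ (T t y) = lam t * φ y := by
  obtain ⟨M, hM⟩ := h_bdd
  have h_conj_mul : ∀ t, 0 < t → (starRingEnd ℂ) (lam t) * lam t = 1 := fun t ht ↦ by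
    rw [RCLike.conj_mul, h_uni t ht]; norm_num
  set U : ℝ → E →L[ℂ] E := fun t ↦ (starRingEnd ℂ) (lam t) • T t
  have hU : ∀ t s : ℝ, 0 < t → 0 < s → U (t + s) = U t * U s := fun t s ht hs ↦ by
    simp only [U, eigenvalue_add h_sg hx h_eig ht hs, map_mul, smul_mul_smul, h_sg t s ht hs]
    rfl
  have hU_bdd : ∀ t : ℝ, 0 < t → ‖U t‖ ≤ M := fun t ht ↦ by
    simpa [U, norm_smul, h_uni t ht] using hM t ht
  have hU_fix : ∀ t : ℝ, 0 < t → U t x = x := fun t ht ↦ by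
    simp only [U, smul_apply, h_eig t ht, smul_smul, h_conj_mul t ht, one_smul]
  obtain ⟨φ, hφx, hφ⟩ := exists_dual_apply_ne_zero_of_forall_apply_eq_self U hU hU_bdd hx hU_fix
  refine ⟨φ, fun h ↦ hφx (by simp [h]), fun t ht y ↦ ?_⟩
  have hT : T t y = lam t • U t y := by
    simp only [U, smul_apply, smul_smul, mul_comm (lam t), h_conj_mul t ht, one_smul]
  rw [hT, map_smul, hφ t ht, smul_eq_mul]

/-- Every unimodular eigenvalue of a bounded one-parameter semigroup on a complex
Banach space is also an eigenvalue of the dual semigroup. -/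
theorem stmt_16
    {E : Type*} [NormedAddCommGroup E] [NormedSpace ℂ E] [CompleteSpace E]
    (T : ℝ → (E →L[ℂ] E))
    (h_sg : ∀ t s : ℝ, 0 < t → 0 < s → T (t + s) = (T t).comp (T s))
    (h_bdd : ∃ M : ℝ, ∀ t : ℝ, 0 < t → ‖T t‖ ≤ M)
    (lam : ℝ → ℂ) (h_uni : ∀ t : ℝ, 0 < t → ‖lam t‖ = 1)
    (x : E) (hx : x ≠ 0)
    (h_eig : ∀ t : ℝ, 0 < t → T t x = lam t • x) :
    ∃ φ : E →L[ℂ] ℂ, φ ≠ 0 ∧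
      ∀ t : ℝ, 0 < t → ∀ y : E, φ (T t y) = lam t * φ y :=
  stmt_16_general T h_sg h_bdd lam h_uni x hx h_eig
end
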